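/- Assume the two shifted (isomonodromic) refactorization identities B₂⁽ᵗ⁻¹⁾(z+1)·B₁⁽ᵗ⁻¹⁾(z) = B₁⁽ᵗ⁾(z)·B₂⁽ᵗ⁾(z) and B₂⁽ᵗ⁾(z+1)·B₁⁽ᵗ⁾(z) = B₁⁽ᵗ⁺¹⁾(z)·B₂⁽ᵗ⁺¹⁾(z) hold for all admissible z, and that the scalars q₂⁽ᵗ⁾†·p₁⁽ᵗ⁾, q₂⁽ᵗ⁾†·A⁻¹·p₁⁽ᵗ⁻¹⁾, q₂⁽ᵗ⁾†·A⁻²·p₁⁽ᵗ⁾, q₂⁽ᵗ⁾†·A⁻¹·p₁⁽ᵗ⁺¹⁾, q₂⁽ᵗ⁻¹⁾†·A⁻¹·p₁⁽ᵗ⁾ and q₂⁽ᵗ⁺¹⁾†·A⁻¹·p₁⁽ᵗ⁾ are nonzero. Then the following time-dependent discrete Euler–Lagrange identities hold (they are the Euler–Lagrange equations of the time-dependent Lagrangian L(X,Y,s) obtained from (z₂−z₁)log(x₂†x₁) + (z₁−ζ₂)log(x₂†A⁻¹y₁) + (ζ₂−ζ₁)log(y₂†A⁻²y₁) + (ζ₁−z₂)log(y₂†A⁻¹x₁)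 by replacing z₂, ζ₂ by z₂(s), ζ₂(s)): (z₂(t)−ζ₁)·(q₂⁽ᵗ⁾†·A⁻¹·p₁⁽ᵗ⁻¹⁾)⁻¹ • (A⁻¹·p₁⁽ᵗ⁻¹⁾) + (ζ₁−ζ₂(t))·(q₂⁽ᵗ⁾†·A⁻²·p₁⁽ᵗ⁾)⁻¹ • (A⁻²·p₁⁽ᵗ⁾) = (z₂(t+1)−z₁)·(q₂⁽ᵗ⁾†·p₁⁽ᵗ⁾)⁻¹ • p₁⁽ᵗ⁾ + (z₁−ζ₂(t+1))·(q₂⁽ᵗ⁾†·A⁻¹·p₁⁽ᵗ⁺¹⁾)⁻¹ • (A⁻¹·p₁⁽ᵗ⁺¹⁾) as column vectors, and (z₁−ζ₂(t))·(q₂⁽ᵗ⁻¹⁾†·A⁻¹·p₁⁽ᵗ⁾)⁻¹ • (q₂⁽ᵗ⁻¹⁾†·A⁻¹) + (ζ₂(t)−ζ₁)·(q₂⁽ᵗ⁾†·A⁻²·p₁⁽ᵗ⁾)⁻¹ • (q₂⁽ᵗ⁾†·A⁻²) = (z₁−z₂(t+1))·(q₂⁽ᵗ⁾†·p₁⁽ᵗ⁾)⁻¹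 • q₂⁽ᵗ⁾† + (z₂(t+1)−ζ₁)·(q₂⁽ᵗ⁺¹⁾†·A⁻¹·p₁⁽ᵗ⁾)⁻¹ • (q₂⁽ᵗ⁺¹⁾†·A⁻¹) as row vectors. -/

import Mathlib

/-!
Clearing denominators turns a refactorization `B₂(z+1) B₁(z) = B₁'(z) B₂'(z)` into a polynomial
identity in `z`, which then holds at every `z`. At a pole it gives a rank-one residue identity; at
a zero `ζ₁` or `ζ₂(s)` a null vector of one side must be a null vector of the other. Either way
a vector such as `A⁻¹ p₂` becomes a combination of two others with one unknown coefficient,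
which is fixed by pairing with a suitable row (column) and `tr (G A⁻¹) = pole − zero`. Both sides
of the column identity turn out to equal `A⁻¹ p₂⁽ᵗ⁾` (the left from the step `t−1 → t` at
`z = ζ₁`, the right from the step `t → t+1` at `z = z₁`), and both sides of the row identity
equal `q₁⁽ᵗ⁾ A⁻¹`.
-/

open Matrix

theorem smul_add_eq_zero_of_forall_notMem {K E : Type*} [Field K] [Infinite K] [AddCommGroup E]
    [Module K E] {U V : E} {s : Set K} (hs : s.Finite) (h : ∀ z ∉ s, z • U + V = 0) (z : K) :
    z • U + V = 0 := by
  obtain ⟨z₀, hz₀, z₁, hz₁, hne⟩ := hs.infinite_compl.nontrivial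
  have hU : U = 0 := by
    have h' : (z₁ - z₀) • U = 0 := by
      linear_combination (norm := module) h z₁ hz₁ - h z₀ hz₀
    exact (smul_eq_zero.1 h').resolve_left (sub_ne_zero.2 hne.symm)
  simpa [hU] using h z₀ hz₀

theorem eq_smul_add_smul_of_smul_add_smul_eq {K E : Type*} [Field K] [AddCommGroup E]
    [Module K E] (φ : E →ₗ[K] K) {x y w : E} {γ c δ : K} (hx : φ x ≠ 0) (hw : φ w ≠ 0)
    (hy : φ y = δ) (h : γ • x + φ x • y = c • w) :
    y = (-γ / φ x) • x + ((γ + δ) / φ w) • w := by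
  have hc : c = φ x * (γ + δ) / φ w := by
    have hφ := congrArg φ h
    simp only [map_add, map_smul, hy, smul_eq_mul] at hφ
    field_simp
    linear_combination -hφ
  calc y = (φ x)⁻¹ • (c • w - γ • x) := by rw [← h, add_sub_cancel_left, inv_smul_smul₀ hx]
    _ = _ := by rw [hc]; match_scalars <;> field_simp

section Refactorization

variable {K R : Type*} [Field K] [Ring R] [Algebra K R]

/-- `(A + (z-β)⁻¹ G₂) (A + (z-α)⁻¹ G₁) = (A + (z-α)⁻¹ G₁') (A + (z-β)⁻¹ G₂')` multiplied through
by `(z-α)(z-β)`. For the paper's `B₂⁽ˢ⁻¹⁾(z+1) B₁⁽ˢ⁻¹⁾(z) = B₁⁽ˢ⁾(z) B₂⁽ˢ⁾(z)` take `α = z₁` and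
`β = z₂(s)`. -/
def IsRefactorization (A G₁ G₂ G₁' G₂' : R) (α β : K) : Prop :=
  ∀ z : K, ((z - β) • A + G₂) * ((z - α) • A + G₁) = ((z - α) • A + G₁') * ((z - β) • A + G₂')

theorem isRefactorization_of_forall_ne [Infinite K] {A G₁ G₂ G₁' G₂' : R} {α β : K}
    (h : ∀ z : K, z ≠ α → z ≠ β →
      (A + (z - β)⁻¹ • G₂) * (A + (z - α)⁻¹ • G₁) = (A + (z - α)⁻¹ • G₁') * (A + (z - β)⁻¹ • G₂')) :
    IsRefactorization A G₁ G₂ G₁' G₂' α β := by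
  -- the `z²` terms cancel, so the difference of the two sides is affine in `z`
  have haffine : ∀ z : K,
      ((z - β) • A + G₂) * ((z - α) • A + G₁) - ((z - α) • A + G₁') * ((z - β) • A + G₂')
        = z • (A * G₁ + G₂ * A - A * G₂' - G₁' * A)
          + (G₂ * G₁ - G₁' * G₂' - β • (A * G₁) - α • (G₂ * A)
            + α • (A * G₂') + β • (G₁' * A)) := by
    intro z
    simp only [add_mul, mul_add, smul_mul_assoc, mul_smul_comm]
    module
  intro z
  rw [← sub_eq_zero, haffine]
  refine smul_add_eq_zero_of_forall_notMem (s := {α, β}) (Set.toFinite _) (fun z hz => ?_) z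
  simp only [Set.mem_insert_iff, Set.mem_singleton_iff, not_or] at hz
  have hclear : ∀ {γ : K} (G : R), γ ≠ 0 → γ • A + G = γ • (A + γ⁻¹ • G) := fun G hγ => by
    rw [smul_add, smul_inv_smul₀ hγ]
  rw [← haffine, sub_eq_zero, hclear G₂ (sub_ne_zero.2 hz.2), hclear G₁ (sub_ne_zero.2 hz.1),
    hclear G₁' (sub_ne_zero.2 hz.1), hclear G₂' (sub_ne_zero.2 hz.2), smul_mul_smul_comm,
    smul_mul_smul_comm, h z hz.1 hz.2, mul_comm]

end Refactorization

section RankOne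

variable {K : Type*} [Field K] {m n : Type*}

theorem mul_fin_one_eq_smul (p : Matrix n (Fin 1) K) (M : Matrix (Fin 1) (Fin 1) K) :
    p * M = M 0 0 • p := by
  ext i k
  rw [Subsingleton.elim k 0]
  simp [mul_apply, mul_comm]

theorem fin_one_mul_eq_smul (M : Matrix (Fin 1) (Fin 1) K) (q : Matrix (Fin 1) n K) :
    M * q = M 0 0 • q := by
  ext i k
  rw [Subsingleton.elim i 0]
  simp [mul_apply]

theorem exists_eq_smul_of_mul_eq_mul {u p : Matrix n (Fin 1) K} {q w : Matrix (Fin 1) m K}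
    (hq : q ≠ 0) (h : u * q = p * w) : ∃ c : K, u = c • p := by
  obtain ⟨j, hj⟩ : ∃ j, q 0 j ≠ 0 := by
    by_contra! h0
    exact hq (Matrix.ext fun i j => by rw [Subsingleton.elim i 0, h0]; rfl)
  refine ⟨w 0 j / q 0 j, Matrix.ext fun i k => ?_⟩
  have hij := congrFun (congrFun h i) j
  simp only [mul_apply, Finset.univ_unique, Fin.default_eq_zero, Finset.sum_singleton] at hij
  rw [Subsingleton.elim k 0, Matrix.smul_apply, smul_eq_mul]
  field_simp
  linear_combination hij

theorem exists_eq_smul_of_mul_eq_mul' {u q : Matrix (Fin 1) n K} {p w : Matrix m (Fin 1) K}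
    (hp : p ≠ 0) (h : p * u = w * q) : ∃ c : K, u = c • q := by
  obtain ⟨c, hc⟩ := exists_eq_smul_of_mul_eq_mul (u := uᵀ) (q := pᵀ) (p := qᵀ) (w := wᵀ)
    (by rwa [Ne, transpose_eq_zero]) (by rw [← transpose_mul, h, transpose_mul])
  exact ⟨c, by rw [← transpose_transpose u, hc, transpose_smul, transpose_transpose]⟩

variable [Fintype n]

def rowPairing (q : Matrix (Fin 1) n K) : Matrix n (Fin 1) K →ₗ[K] K where
  toFun v := (q * v) 0 0
  map_add' u v := by simp [Matrix.mul_add]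
  map_smul' c v := by simp

def colPairing (p : Matrix n (Fin 1) K) : Matrix (Fin 1) n K →ₗ[K] K where
  toFun v := (v * p) 0 0
  map_add' u v := by simp [Matrix.add_mul]
  map_smul' c v := by simp

@[simp] theorem rowPairing_apply (q : Matrix (Fin 1) n K) (v : Matrix n (Fin 1) K) :
    rowPairing q v = (q * v) 0 0 := rfl

@[simp] theorem colPairing_apply (p : Matrix n (Fin 1) K) (v : Matrix (Fin 1) n K) :
    colPairing p v = (v * p) 0 0 := rfl

theorem trace_col_mul_row_mul (p : Matrix n (Fin 1) K) (q : Matrix (Fin 1) n K)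
    (M : Matrix n n K) : (p * q * M).trace = (q * M * p) 0 0 := by
  rw [Matrix.mul_assoc, trace_mul_comm, trace_fin_one]

variable [DecidableEq n] {A : Matrix n n K}

theorem inv_sq_eq_inv_mul_inv (A : Matrix n n K) : (A ^ 2)⁻¹ = A⁻¹ * A⁻¹ := by
  rw [← inv_pow', sq]

theorem exists_eq_smul_inv_mul_of_mul_eq_zero (hA : IsUnit A.det) {γ : K} (hγ : γ ≠ 0)
    {p x : Matrix n (Fin 1) K} {q : Matrix (Fin 1) n K} (h : (γ • A + p * q) * x = 0) :
    ∃ c : K, x = c • (A⁻¹ * p) := by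
  rw [Matrix.add_mul, Matrix.smul_mul, Matrix.mul_assoc, mul_fin_one_eq_smul] at h
  have hAx : A * x = (-(γ⁻¹ * (q * x) 0 0)) • p := by
    rw [← inv_smul_smul₀ hγ (A * x), eq_neg_of_add_eq_zero_left h, smul_neg, smul_smul, neg_smul]
  exact ⟨_, by rw [← nonsing_inv_mul_cancel_left A x hA, hAx, Matrix.mul_smul]⟩

theorem exists_eq_smul_mul_inv_of_mul_eq_zero (hA : IsUnit A.det) {γ : K} (hγ : γ ≠ 0)
    {p : Matrix n (Fin 1) K} {q y : Matrix (Fin 1) n K} (h : y * (γ • A + p * q) = 0) :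
    ∃ c : K, y = c • (q * A⁻¹) := by
  rw [Matrix.mul_add, Matrix.mul_smul, ← Matrix.mul_assoc, fin_one_mul_eq_smul] at h
  have hyA : y * A = (-(γ⁻¹ * (y * p) 0 0)) • q := by
    rw [← inv_smul_smul₀ hγ (y * A), eq_neg_of_add_eq_zero_left h, smul_neg, smul_smul, neg_smul]
  exact ⟨_, by rw [← mul_nonsing_inv_cancel_right A y hA, hyA, Matrix.smul_mul]⟩

end RankOne

section Step

variable {K : Type*} [Field K] {n : Type*} [Fintype n] [DecidableEq n] {A : Matrix n n K}
  {α α' β β' : K} {p₁ p₂ p₁' p₂' : Matrix n (Fin 1) K} {q₁ q₂ q₁' q₂' : Matrix (Fin 1) n K}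

/-- The residue at `z = α`: `((α-β) A + p₂ q₂) p₁ q₁ = p₁' q₁' (…)`. -/
theorem IsRefactorization.inv_mul_p₂_eq
    (h : IsRefactorization A (p₁ * q₁) (p₂ * q₂) (p₁' * q₁') (p₂' * q₂') α β)
    (hA : IsUnit A.det) (hq₁ : q₁ ≠ 0) (hG₂ : (p₂ * q₂ * A⁻¹).trace = β - β')
    (hs : (q₂ * p₁) 0 0 ≠ 0) (hs' : (q₂ * A⁻¹ * p₁') 0 0 ≠ 0) :
    A⁻¹ * p₂ = ((β - α) * ((q₂ * p₁) 0 0)⁻¹) • p₁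
      + ((α - β') * ((q₂ * A⁻¹ * p₁') 0 0)⁻¹) • (A⁻¹ * p₁') := by
  have hres := h α
  simp only [sub_self, zero_smul, zero_add] at hres
  rw [← Matrix.mul_assoc, Matrix.mul_assoc p₁'] at hres
  obtain ⟨c, hc⟩ := exists_eq_smul_of_mul_eq_mul hq₁ hres
  have hc' : (α - β) • p₁ + (q₂ * p₁) 0 0 • (A⁻¹ * p₂) = c • (A⁻¹ * p₁') := by
    simpa only [Matrix.add_mul, Matrix.smul_mul, Matrix.mul_assoc, mul_fin_one_eq_smul,
      Matrix.mul_add, Matrix.mul_smul, nonsing_inv_mul_cancel_left A p₁ hA]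
      using congrArg (A⁻¹ * ·) hc
  rw [eq_smul_add_smul_of_smul_add_smul_eq (rowPairing q₂) hs
    (by simpa [Matrix.mul_assoc] using hs')
    (by rw [rowPairing_apply, ← Matrix.mul_assoc, ← trace_col_mul_row_mul, hG₂]) hc']
  simp only [rowPairing_apply, Matrix.mul_assoc]
  match_scalars <;> ring

/-- The residue at `z = β`: `p₂ q₂ ((β-α) A + p₁ q₁) = (…) p₂' q₂'`. -/
theorem IsRefactorization.q₁_mul_inv_eq
    (h : IsRefactorization A (p₁ * q₁) (p₂ * q₂) (p₁' * q₁') (p₂' * q₂') α β)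
    (hA : IsUnit A.det) (hp₂ : p₂ ≠ 0) (hG₁ : (p₁ * q₁ * A⁻¹).trace = α - α')
    (hs : (q₂ * p₁) 0 0 ≠ 0) (hs' : (q₂' * A⁻¹ * p₁) 0 0 ≠ 0) :
    q₁ * A⁻¹ = ((α - β) * ((q₂ * p₁) 0 0)⁻¹) • q₂
      + ((β - α') * ((q₂' * A⁻¹ * p₁) 0 0)⁻¹) • (q₂' * A⁻¹) := by
  have hres := h β
  simp only [sub_self, zero_smul, zero_add] at hres
  rw [Matrix.mul_assoc, ← Matrix.mul_assoc _ p₂'] at hres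
  obtain ⟨e, he⟩ := exists_eq_smul_of_mul_eq_mul' hp₂ hres
  have he' : (β - α) • q₂ + (q₂ * p₁) 0 0 • (q₁ * A⁻¹) = e • (q₂' * A⁻¹) := by
    simpa only [Matrix.mul_add, Matrix.mul_smul, ← Matrix.mul_assoc, fin_one_mul_eq_smul,
      Matrix.add_mul, Matrix.smul_mul, mul_nonsing_inv_cancel_right A q₂ hA]
      using congrArg (· * A⁻¹) he
  rw [eq_smul_add_smul_of_smul_add_smul_eq (colPairing p₁) hs hs'
    (by rw [colPairing_apply, ← trace_col_mul_row_mul, hG₁]) he']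
  simp only [colPairing_apply]
  match_scalars <;> ring

/-- The zero at `z = α'`: `(α' - α) A + p₁ q₁` kills `A⁻¹ p₁`, so `((α'-β) A + p₂' q₂') A⁻¹ p₁`
lies in the kernel of `(α' - α) A + p₁' q₁'`, which is spanned by `A⁻¹ p₁'`. -/
theorem IsRefactorization.inv_mul_p₂'_eq
    (h : IsRefactorization A (p₁ * q₁) (p₂ * q₂) (p₁' * q₁') (p₂' * q₂') α β)
    (hA : IsUnit A.det) (hα : α ≠ α') (hG₁ : (p₁ * q₁ * A⁻¹).trace = α - α')
    (hG₂' : (p₂' * q₂' * A⁻¹).trace = β - β')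
    (hs : (q₂' * A⁻¹ * p₁) 0 0 ≠ 0) (hs' : (q₂' * (A ^ 2)⁻¹ * p₁') 0 0 ≠ 0) :
    A⁻¹ * p₂' = ((β - α') * ((q₂' * A⁻¹ * p₁) 0 0)⁻¹) • (A⁻¹ * p₁)
      + ((α' - β') * ((q₂' * (A ^ 2)⁻¹ * p₁') 0 0)⁻¹) • ((A ^ 2)⁻¹ * p₁') := by
  have hker : ((α' - α) • A + p₁ * q₁) * (A⁻¹ * p₁) = 0 := by
    rw [Matrix.add_mul, Matrix.smul_mul, mul_nonsing_inv_cancel_left A p₁ hA, Matrix.mul_assoc,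
      mul_fin_one_eq_smul, ← Matrix.mul_assoc, ← trace_col_mul_row_mul, hG₁]
    module
  have hzero : ((α' - α) • A + p₁' * q₁') * (((α' - β) • A + p₂' * q₂') * (A⁻¹ * p₁)) = 0 := by
    rw [← Matrix.mul_assoc, ← h α', Matrix.mul_assoc, hker, Matrix.mul_zero]
  obtain ⟨c, hc⟩ := exists_eq_smul_inv_mul_of_mul_eq_zero hA (sub_ne_zero.2 hα.symm) hzero
  have hc' : (α' - β) • (A⁻¹ * p₁) + (q₂' * (A⁻¹ * p₁)) 0 0 • (A⁻¹ * p₂')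
      = c • (A⁻¹ * (A⁻¹ * p₁')) := by
    simpa only [Matrix.add_mul, Matrix.smul_mul, Matrix.mul_assoc, mul_fin_one_eq_smul,
      Matrix.mul_add, Matrix.mul_smul, mul_nonsing_inv_cancel_left A p₁ hA]
      using congrArg (A⁻¹ * ·) hc
  rw [inv_sq_eq_inv_mul_inv] at hs' ⊢
  rw [eq_smul_add_smul_of_smul_add_smul_eq (rowPairing q₂')
    (by simpa [Matrix.mul_assoc] using hs) (by simpa [Matrix.mul_assoc] using hs')
    (by rw [rowPairing_apply, ← Matrix.mul_assoc, ← trace_col_mul_row_mul, hG₂']) hc']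
  simp only [rowPairing_apply, Matrix.mul_assoc]
  match_scalars <;> ring

/-- The zero at `z = β'`, on the left: `q₂ A⁻¹` annihilates `(β' - β) A + p₂ q₂`, so
`q₂ A⁻¹ ((β'-α) A + p₁' q₁')` annihilates `(β' - β) A + p₂' q₂'` and is a multiple of `q₂' A⁻¹`. -/
theorem IsRefactorization.q₁'_mul_inv_eq
    (h : IsRefactorization A (p₁ * q₁) (p₂ * q₂) (p₁' * q₁') (p₂' * q₂') α β)
    (hA : IsUnit A.det) (hβ : β ≠ β') (hG₂ : (p₂ * q₂ * A⁻¹).trace = β - β')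
    (hG₁' : (p₁' * q₁' * A⁻¹).trace = α - α')
    (hs : (q₂ * A⁻¹ * p₁') 0 0 ≠ 0) (hs' : (q₂' * (A ^ 2)⁻¹ * p₁') 0 0 ≠ 0) :
    q₁' * A⁻¹ = ((α - β') * ((q₂ * A⁻¹ * p₁') 0 0)⁻¹) • (q₂ * A⁻¹)
      + ((β' - α') * ((q₂' * (A ^ 2)⁻¹ * p₁') 0 0)⁻¹) • (q₂' * (A ^ 2)⁻¹) := by
  have hker : q₂ * A⁻¹ * ((β' - β) • A + p₂ * q₂) = 0 := by
    rw [Matrix.mul_add, Matrix.mul_smul, nonsing_inv_mul_cancel_right A q₂ hA, ← Matrix.mul_assoc,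
      fin_one_mul_eq_smul, ← trace_col_mul_row_mul, hG₂]
    module
  have hzero : q₂ * A⁻¹ * ((β' - α) • A + p₁' * q₁') * ((β' - β) • A + p₂' * q₂') = 0 := by
    rw [Matrix.mul_assoc, ← h β', ← Matrix.mul_assoc, hker, Matrix.zero_mul]
  obtain ⟨c, hc⟩ := exists_eq_smul_mul_inv_of_mul_eq_zero hA (sub_ne_zero.2 hβ.symm) hzero
  have hc' : (β' - α) • (q₂ * A⁻¹) + (q₂ * A⁻¹ * p₁') 0 0 • (q₁' * A⁻¹)
      = c • (q₂' * A⁻¹ * A⁻¹) := by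
    simpa only [Matrix.mul_add, Matrix.mul_smul, ← Matrix.mul_assoc, fin_one_mul_eq_smul,
      Matrix.add_mul, Matrix.smul_mul, mul_nonsing_inv_cancel_right A (q₂ * A⁻¹) hA]
      using congrArg (· * A⁻¹) hc
  rw [inv_sq_eq_inv_mul_inv, ← Matrix.mul_assoc] at hs' ⊢
  rw [eq_smul_add_smul_of_smul_add_smul_eq (colPairing p₁') hs hs'
    (by rw [colPairing_apply, ← trace_col_mul_row_mul, hG₁']) hc']
  simp only [colPairing_apply]
  match_scalars <;> ring

end Step

/-- The data at times `s = t−1, t, t+1` carry the suffixes `m`, none, `p`. -/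
theorem isomonodromic_euler_lagrange_general
    (r : ℕ)
    (A : Matrix (Fin r) (Fin r) ℂ) (hA : IsUnit A.det)
    (z₁ z₂ ζ₁ ζ₂ : ℂ) (t : ℤ)
    (hd' : z₁ ≠ ζ₁) (hd'' : z₂ ≠ ζ₂)
    (p₁m p₂m p₁ p₂ p₁p p₂p : Matrix (Fin r) (Fin 1) ℂ)
    (q₁m q₂m q₁ q₂ q₁p q₂p : Matrix (Fin 1) (Fin r) ℂ)
    (hp₂ : p₂ ≠ 0)
    (hq₁ : q₁ ≠ 0)
    (hζ₁m : (p₁m * q₁m * A⁻¹).trace = z₁ - ζ₁)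
    (hζ₁t : (p₁ * q₁ * A⁻¹).trace = z₁ - ζ₁)
    (hζ₂m : (p₂m * q₂m * A⁻¹).trace = z₂ - ζ₂)
    (hζ₂t : (p₂ * q₂ * A⁻¹).trace = z₂ - ζ₂)
    (hre₁ : ∀ z : ℂ, z ≠ z₁ → z ≠ z₂ - (t : ℂ) →
      (A + (z + 1 - (z₂ - ((t : ℂ) - 1)))⁻¹ • (p₂m * q₂m)) * (A + (z - z₁)⁻¹ • (p₁m * q₁m)) =
      (A + (z - z₁)⁻¹ • (p₁ * q₁)) * (A + (z - (z₂ - (t : ℂ)))⁻¹ • (p₂ * q₂)))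
    (hre₂ : ∀ z : ℂ, z ≠ z₁ → z ≠ z₂ - ((t : ℂ) + 1) →
      (A + (z + 1 - (z₂ - (t : ℂ)))⁻¹ • (p₂ * q₂)) * (A + (z - z₁)⁻¹ • (p₁ * q₁)) =
      (A + (z - z₁)⁻¹ • (p₁p * q₁p)) * (A + (z - (z₂ - ((t : ℂ) + 1)))⁻¹ • (p₂p * q₂p)))
    (hs₁ : (q₂ * p₁) 0 0 ≠ 0)
    (hs₂ : (q₂ * A⁻¹ * p₁m) 0 0 ≠ 0)
    (hs₃ : (q₂ * (A ^ 2)⁻¹ * p₁) 0 0 ≠ 0)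
    (hs₄ : (q₂ * A⁻¹ * p₁p) 0 0 ≠ 0)
    (hs₅ : (q₂m * A⁻¹ * p₁) 0 0 ≠ 0)
    (hs₆ : (q₂p * A⁻¹ * p₁) 0 0 ≠ 0) :
    ((((z₂ - (t : ℂ)) - ζ₁) * ((q₂ * A⁻¹ * p₁m) 0 0)⁻¹) • (A⁻¹ * p₁m)
        + ((ζ₁ - (ζ₂ - (t : ℂ))) * ((q₂ * (A ^ 2)⁻¹ * p₁) 0 0)⁻¹) • ((A ^ 2)⁻¹ * p₁)
      = (((z₂ - ((t : ℂ) + 1)) - z₁) * ((q₂ * p₁) 0 0)⁻¹) • p₁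
        + ((z₁ - (ζ₂ - ((t : ℂ) + 1))) * ((q₂ * A⁻¹ * p₁p) 0 0)⁻¹) • (A⁻¹ * p₁p)) ∧
    (((z₁ - (ζ₂ - (t : ℂ))) * ((q₂m * A⁻¹ * p₁) 0 0)⁻¹) • (q₂m * A⁻¹)
        + (((ζ₂ - (t : ℂ)) - ζ₁) * ((q₂ * (A ^ 2)⁻¹ * p₁) 0 0)⁻¹) • (q₂ * (A ^ 2)⁻¹)
      = ((z₁ - (z₂ - ((t : ℂ) + 1))) * ((q₂ * p₁) 0 0)⁻¹) • q₂
        + (((z₂ - ((t : ℂ) + 1)) - ζ₁) * ((q₂p * A⁻¹ * p₁) 0 0)⁻¹) • (q₂p * A⁻¹)) := by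
  have hshift : ∀ s : ℂ, z₂ - ζ₂ = (z₂ - s) - (ζ₂ - s) := fun s => by ring
  have h₁ : IsRefactorization A (p₁m * q₁m) (p₂m * q₂m) (p₁ * q₁) (p₂ * q₂) z₁ (z₂ - (t : ℂ)) :=
    isRefactorization_of_forall_ne fun z hz₁ hz₂ => by
      simpa only [show z + 1 - (z₂ - ((t : ℂ) - 1)) = z - (z₂ - t) by ring] using hre₁ z hz₁ hz₂
  have h₂ : IsRefactorization A (p₁ * q₁) (p₂ * q₂) (p₁p * q₁p) (p₂p * q₂p) z₁
      (z₂ - ((t : ℂ) + 1)) :=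
    isRefactorization_of_forall_ne fun z hz₁ hz₂ => by
      simpa only [show z + 1 - (z₂ - (t : ℂ)) = z - (z₂ - (t + 1)) by ring] using hre₂ z hz₁ hz₂
  exact ⟨(h₁.inv_mul_p₂'_eq hA hd' hζ₁m (hζ₂t.trans (hshift _)) hs₂ hs₃).symm.trans
      (h₂.inv_mul_p₂_eq hA hq₁ (hζ₂t.trans (hshift _)) hs₁ hs₄),
    (h₁.q₁'_mul_inv_eq hA (mt sub_left_inj.1 hd'') (hζ₂m.trans (hshift _)) hζ₁t hs₅ hs₃).symm.trans
      (h₂.q₁_mul_inv_eq hA hp₂ hζ₁t hs₁ hs₆)⟩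

/-- Time-dependent discrete Euler–Lagrange identities for the isomonodromic
refactorization `B₂⁽ˢ⁾(z+1)B₁⁽ˢ⁾(z) = B₁⁽ˢ⁺¹⁾(z)B₂⁽ˢ⁺¹⁾(z)`, where
`z₂(s) = z₂ − s`, `ζ₂(s) = ζ₂ − s`.  The data at times `s = t−1, t, t+1` are
denoted by suffixes `m`, none, `p` respectively. -/
theorem isomonodromic_euler_lagrange
    (r : ℕ) (hr : 1 ≤ r)
    (A : Matrix (Fin r) (Fin r) ℂ) (hA : IsUnit A.det)
    (z₁ z₂ ζ₁ ζ₂ : ℂ) (t : ℤ)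
    (hd : ∀ s : ℤ, z₁ ≠ z₂ - (s : ℂ) ∧ z₁ ≠ ζ₂ - (s : ℂ) ∧
      ζ₁ ≠ z₂ - (s : ℂ) ∧ ζ₁ ≠ ζ₂ - (s : ℂ))
    (hd' : z₁ ≠ ζ₁) (hd'' : z₂ ≠ ζ₂)
    (p₁m p₂m p₁ p₂ p₁p p₂p : Matrix (Fin r) (Fin 1) ℂ)
    (q₁m q₂m q₁ q₂ q₁p q₂p : Matrix (Fin 1) (Fin r) ℂ)
    (hp₁m : p₁m ≠ 0) (hp₂m : p₂m ≠ 0) (hp₁ : p₁ ≠ 0) (hp₂ : p₂ ≠ 0)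
    (hp₁p : p₁p ≠ 0) (hp₂p : p₂p ≠ 0)
    (hq₁m : q₁m ≠ 0) (hq₂m : q₂m ≠ 0) (hq₁ : q₁ ≠ 0) (hq₂ : q₂ ≠ 0)
    (hq₁p : q₁p ≠ 0) (hq₂p : q₂p ≠ 0)
    (hζ₁m : (p₁m * q₁m * A⁻¹).trace = z₁ - ζ₁)
    (hζ₁t : (p₁ * q₁ * A⁻¹).trace = z₁ - ζ₁)
    (hζ₁p : (p₁p * q₁p * A⁻¹).trace = z₁ - ζ₁)
    (hζ₂m : (p₂m * q₂m * A⁻¹).trace = z₂ - ζ₂)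
    (hζ₂t : (p₂ * q₂ * A⁻¹).trace = z₂ - ζ₂)
    (hζ₂p : (p₂p * q₂p * A⁻¹).trace = z₂ - ζ₂)
    (hre₁ : ∀ z : ℂ, z ≠ z₁ → z ≠ z₂ - (t : ℂ) →
      (A + (z + 1 - (z₂ - ((t : ℂ) - 1)))⁻¹ • (p₂m * q₂m)) * (A + (z - z₁)⁻¹ • (p₁m * q₁m)) =
      (A + (z - z₁)⁻¹ • (p₁ * q₁)) * (A + (z - (z₂ - (t : ℂ)))⁻¹ • (p₂ * q₂)))
    (hre₂ : ∀ z : ℂ, z ≠ z₁ → z ≠ z₂ - ((t : ℂ) + 1) →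
      (A + (z + 1 - (z₂ - (t : ℂ)))⁻¹ • (p₂ * q₂)) * (A + (z - z₁)⁻¹ • (p₁ * q₁)) =
      (A + (z - z₁)⁻¹ • (p₁p * q₁p)) * (A + (z - (z₂ - ((t : ℂ) + 1)))⁻¹ • (p₂p * q₂p)))
    (hs₁ : (q₂ * p₁) 0 0 ≠ 0)
    (hs₂ : (q₂ * A⁻¹ * p₁m) 0 0 ≠ 0)
    (hs₃ : (q₂ * (A ^ 2)⁻¹ * p₁) 0 0 ≠ 0)
    (hs₄ : (q₂ * A⁻¹ * p₁p) 0 0 ≠ 0)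
    (hs₅ : (q₂m * A⁻¹ * p₁) 0 0 ≠ 0)
    (hs₆ : (q₂p * A⁻¹ * p₁) 0 0 ≠ 0) :
    ((((z₂ - (t : ℂ)) - ζ₁) * ((q₂ * A⁻¹ * p₁m) 0 0)⁻¹) • (A⁻¹ * p₁m)
        + ((ζ₁ - (ζ₂ - (t : ℂ))) * ((q₂ * (A ^ 2)⁻¹ * p₁) 0 0)⁻¹) • ((A ^ 2)⁻¹ * p₁)
      = (((z₂ - ((t : ℂ) + 1)) - z₁) * ((q₂ * p₁) 0 0)⁻¹) • p₁
        + ((z₁ - (ζ₂ - ((t : ℂ) + 1))) * ((q₂ * A⁻¹ * p₁p) 0 0)⁻¹) • (A⁻¹ * p₁p)) ∧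
    (((z₁ - (ζ₂ - (t : ℂ))) * ((q₂m * A⁻¹ * p₁) 0 0)⁻¹) • (q₂m * A⁻¹)
        + (((ζ₂ - (t : ℂ)) - ζ₁) * ((q₂ * (A ^ 2)⁻¹ * p₁) 0 0)⁻¹) • (q₂ * (A ^ 2)⁻¹)
      = ((z₁ - (z₂ - ((t : ℂ) + 1))) * ((q₂ * p₁) 0 0)⁻¹) • q₂
        + (((z₂ - ((t : ℂ) + 1)) - ζ₁) * ((q₂p * A⁻¹ * p₁) 0 0)⁻¹) • (q₂p * A⁻¹)) :=
  isomonodromic_euler_lagrange_general r A hA z₁ z₂ ζ₁ ζ₂ t hd' hd'' p₁m p₂m p₁ p₂ p₁p p₂p q₁m q₂m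
    q₁ q₂ q₁p q₂p hp₂ hq₁ hζ₁m hζ₁t hζ₂m hζ₂t hre₁ hre₂ hs₁ hs₂ hs₃ hs₄ hs₅ hs₆
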